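/- arXiv:2502.06768 — 3 statements merged into one kernel-verified Lean document; each statement's English description precedes it below -/
import Mathlib

section
/- Let L ≥ 1 and let f : (subsets of {0,...,L-1}) × {0,...,L-1} → ℝ be any function. Then the average over uniformly random permutations π of ∑_{j=0}^{L-1} f({π(j),...,π(L-1)}, π(j)) equals ∑_{M ⊆ {0,...,L-1}, M ≠ ∅} ∑_{i ∈ M} (1/C(L,|M|)) · (1/|M|) · f(M, i), where C(L,k) is the binomial coefficient. -/
open Finset Equiv

private lemma exists_perm_map {L : ℕ} {M M' : Finset (Fin L)} (h : M.card = M'.card)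
    {i i' : Fin L} (hi : i ∈ M) (hi' : i' ∈ M') :
    ∃ σ : Equiv.Perm (Fin L), M.image σ = M' ∧ σ i = i' := by
  classical
  have hc : Fintype.card {x // x ∈ M} = Fintype.card {x // x ∈ M'} := by
    simpa [Fintype.card_coe] using h
  let e0 : {x // x ∈ M} ≃ {x // x ∈ M'} := Fintype.equivOfCardEq hc
  let e : {x // x ∈ M} ≃ {x // x ∈ M'} :=
    e0.trans (Equiv.swap (e0 ⟨i, hi⟩) ⟨i', hi'⟩)
  refine ⟨e.extendSubtype, ?_, ?_⟩
  · apply Finset.eq_of_subset_of_card_le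
    · intro x hx
      obtain ⟨y, hy, rfl⟩ := Finset.mem_image.mp hx
      exact e.extendSubtype_mem y hy
    · rw [Finset.card_image_of_injective _ (Equiv.injective _)]
      exact le_of_eq h.symm
  · rw [e.extendSubtype_apply_of_mem i hi]
    simp [e, Equiv.swap_apply_left]

private lemma fiber_card_eq {L : ℕ} (A : Finset (Fin L)) (j : Fin L)
    {M M' : Finset (Fin L)} (h : M.card = M'.card)
    {i i' : Fin L} (hi : i ∈ M) (hi' : i' ∈ M') :
    (Finset.univ.filter fun π : Equiv.Perm (Fin L) => A.image π = M ∧ π j = i).card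
    = (Finset.univ.filter fun π : Equiv.Perm (Fin L) => A.image π = M' ∧ π j = i').card := by
  classical
  obtain ⟨σ, hσM, hσi⟩ := exists_perm_map h hi hi'
  apply Finset.card_bij (fun π _ => σ * π)
  · intro π hπ
    simp only [Finset.mem_filter, Finset.mem_univ, true_and] at hπ ⊢
    refine ⟨?_, ?_⟩
    · rw [Equiv.Perm.coe_mul, ← Finset.image_image, hπ.1, hσM]
    · rw [Equiv.Perm.mul_apply, hπ.2, hσi]
  · intro a _ b _ hab
    exact mul_left_cancel hab
  · intro τ hτ
    simp only [Finset.mem_filter, Finset.mem_univ, true_and] at hτ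
    refine ⟨σ⁻¹ * τ, ?_, ?_⟩
    · simp only [Finset.mem_filter, Finset.mem_univ, true_and]
      constructor
      · rw [Equiv.Perm.coe_mul, ← Finset.image_image, hτ.1, ← hσM,
          Finset.image_image]
        ext x
        simp
      · rw [Equiv.Perm.mul_apply, hτ.2, ← hσi]
        simp
    · rw [← mul_assoc, mul_inv_cancel, one_mul]

/-- The average over uniformly random permutations `π` of
`∑_j f({π(j),...,π(L-1)}, π(j))` equals
`∑_{M ≠ ∅} ∑_{i ∈ M} (1/C(L,|M|)) * (1/|M|) * f(M,i)`. -/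
theorem stmt1 (L : ℕ) (hL : 1 ≤ L) (f : Finset (Fin L) → Fin L → ℝ) :
    (∑ π : Equiv.Perm (Fin L), ∑ j : Fin L,
        f ((Finset.univ.filter (fun k : Fin L => j ≤ k)).image π) (π j))
      / (Nat.factorial L : ℝ)
    = ∑ M ∈ Finset.univ.filter (fun M : Finset (Fin L) => M ≠ ∅), ∑ i ∈ M,
        (1 / (L.choose M.card : ℝ)) * (1 / (M.card : ℝ)) * f M i := by
  classical
  set A : Fin L → Finset (Fin L) := fun j => Finset.univ.filter (fun k : Fin L => j ≤ k)
    with hA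
  have hAcard : ∀ j : Fin L, (A j).card = L - (j : ℕ) := by
    intro j
    have : A j = Finset.Ici j := by ext x; simp [hA]
    rw [this, Fin.card_Ici]
  have hjA : ∀ j : Fin L, j ∈ A j := by intro j; simp [hA]
  set N : Fin L → ℕ := fun j =>
    (Finset.univ.filter fun π : Equiv.Perm (Fin L) => (A j).image π = A j ∧ π j = j).card
    with hN
  -- key fiberwise computation
  have key : ∀ (j : Fin L) (g : Finset (Fin L) → Fin L → ℝ),
      (∑ π : Equiv.Perm (Fin L), g ((A j).image π) (π j))
      = ∑ M ∈ Finset.univ.filter (fun M : Finset (Fin L) => M.card = L - (j : ℕ)),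
          ∑ i ∈ M, (N j : ℝ) * g M i := by
    intro j g
    have step1 : ∀ π : Equiv.Perm (Fin L),
        g ((A j).image π) (π j)
        = ∑ M ∈ Finset.univ.filter (fun M : Finset (Fin L) => M.card = L - (j : ℕ)),
            ∑ i ∈ M, if (A j).image π = M ∧ π j = i then g M i else 0 := by
      intro π
      have hM0 : ((A j).image π).card = L - (j : ℕ) := by
        rw [Finset.card_image_of_injective _ (Equiv.injective π), hAcard]
      have hi0 : π j ∈ (A j).image π := Finset.mem_image_of_mem _ (hjA j)
      rw [Finset.sum_eq_single ((A j).image π)]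
      · rw [Finset.sum_eq_single (π j)]
        · simp
        · intro b _ hb
          simp [hb.symm]
        · intro hb
          exact absurd hi0 hb
      · intro M _ hM
        apply Finset.sum_eq_zero
        intro i _
        simp only [ite_eq_right_iff, and_imp]
        intro h1 _
        exact absurd h1.symm hM
      · intro hnot
        simp only [Finset.mem_filter, Finset.mem_univ, true_and] at hnot
        exact absurd hM0 hnot
    rw [Finset.sum_congr rfl fun π _ => step1 π, Finset.sum_comm]
    refine Finset.sum_congr rfl fun M hM => ?_
    rw [Finset.sum_comm]
    refine Finset.sum_congr rfl fun i hi => ?_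
    simp only [Finset.mem_filter, Finset.mem_univ, true_and] at hM
    rw [← Finset.sum_filter, Finset.sum_const, nsmul_eq_mul]
    congr 1
    have hcard : M.card = (A j).card := by rw [hM, hAcard]
    rw [hN]
    exact_mod_cast congrArg (Nat.cast (R := ℝ))
      (fiber_card_eq (A j) j hcard hi (hjA j))
  -- counting: L! = N j * (choose * m)
  have hchoosecard : ∀ j : Fin L,
      (Finset.univ.filter (fun M : Finset (Fin L) => M.card = L - (j : ℕ))).card
        = L.choose (L - (j : ℕ)) := by
    intro j
    have : Finset.univ.filter (fun M : Finset (Fin L) => M.card = L - (j : ℕ))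
        = Finset.powersetCard (L - (j : ℕ)) Finset.univ := by
      rw [Finset.powersetCard_eq_filter, Finset.powerset_univ]
    rw [this, Finset.card_powersetCard, Finset.card_univ, Fintype.card_fin]
  have hcount : ∀ j : Fin L,
      (L.factorial : ℝ) = (N j : ℝ) * ((L.choose (L - (j : ℕ)) : ℝ) * ((L - (j : ℕ) : ℕ) : ℝ)) := by
    intro j
    have h1 := key j (fun _ _ => (1 : ℝ))
    have h2 : (∑ _π : Equiv.Perm (Fin L), (1 : ℝ)) = (L.factorial : ℝ) := by
      rw [Finset.sum_const, Finset.card_univ, nsmul_eq_mul, mul_one]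
      norm_cast
      rw [Fintype.card_perm, Fintype.card_fin]
    rw [h2] at h1
    rw [h1]
    have : ∀ M ∈ Finset.univ.filter (fun M : Finset (Fin L) => M.card = L - (j : ℕ)),
        (∑ _i ∈ M, (N j : ℝ) * 1) = ((L - (j : ℕ) : ℕ) : ℝ) * (N j : ℝ) := by
      intro M hM
      simp only [Finset.mem_filter, Finset.mem_univ, true_and] at hM
      rw [Finset.sum_const, nsmul_eq_mul, mul_one, hM]
    rw [Finset.sum_congr rfl this, Finset.sum_const, hchoosecard j, nsmul_eq_mul]
    ring
  -- per-j scalar identity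
  have hscal : ∀ j : Fin L, (N j : ℝ) / (L.factorial : ℝ)
      = 1 / ((L.choose (L - (j : ℕ)) : ℝ) * ((L - (j : ℕ) : ℕ) : ℝ)) := by
    intro j
    have hm : (0 : ℝ) < ((L - (j : ℕ) : ℕ) : ℝ) := by
      have := j.isLt; exact_mod_cast Nat.sub_pos_of_lt this
    have hC : (0 : ℝ) < (L.choose (L - (j : ℕ)) : ℝ) := by
      exact_mod_cast Nat.choose_pos (Nat.sub_le L j)
    have hfac : (0 : ℝ) < (L.factorial : ℝ) := by exact_mod_cast L.factorial_pos
    have hNne : (N j : ℝ) ≠ 0 := by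
      intro h0
      rw [hcount j, h0, zero_mul] at hfac
      exact lt_irrefl _ hfac
    rw [hcount j]
    rw [div_mul_cancel_left₀ hNne, one_div]
  -- reindex RHS over j
  have hmap : ∀ M ∈ Finset.univ.filter (fun M : Finset (Fin L) => M ≠ ∅),
      (⟨(L - M.card) % L, Nat.mod_lt _ (by omega)⟩ : Fin L) ∈ (Finset.univ : Finset (Fin L)) :=
    fun _ _ => Finset.mem_univ _
  have hre := Finset.sum_fiberwise_of_maps_to hmap
    (fun M => ∑ i ∈ M, (1 / (L.choose M.card : ℝ)) * (1 / (M.card : ℝ)) * f M i)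
  rw [← hre]
  -- transform LHS
  rw [Finset.sum_comm]
  have hfilter : ∀ j : Fin L,
      ((Finset.univ.filter (fun M : Finset (Fin L) => M ≠ ∅)).filter
        (fun M => (⟨(L - M.card) % L, Nat.mod_lt _ (by omega)⟩ : Fin L) = j))
      = Finset.univ.filter (fun M : Finset (Fin L) => M.card = L - (j : ℕ)) := by
    intro j
    ext M
    have hMle : M.card ≤ L := by
      simpa using Finset.card_le_univ M
    have hjlt : (j : ℕ) < L := j.isLt
    simp only [Finset.mem_filter, Finset.mem_univ, true_and, Fin.ext_iff]
    constructor
    · rintro ⟨hne, heq⟩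
      have hpos : 0 < M.card := Finset.card_pos.mpr (Finset.nonempty_iff_ne_empty.mpr hne)
      have : (L - M.card) % L = L - M.card := Nat.mod_eq_of_lt (by omega)
      omega
    · intro h
      have hpos : 0 < M.card := by omega
      refine ⟨fun he => by simp [he] at hpos, ?_⟩
      have : (L - M.card) % L = L - M.card := Nat.mod_eq_of_lt (by omega)
      omega
  rw [Finset.sum_div, Finset.sum_congr rfl fun j _ => congrArg (· / (L.factorial : ℝ)) (key j f)]
  refine Finset.sum_congr rfl fun j _ => ?_
  rw [hfilter j, Finset.sum_div]
  refine Finset.sum_congr rfl fun M hM => ?_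
  simp only [Finset.mem_filter, Finset.mem_univ, true_and] at hM
  rw [Finset.sum_div]
  refine Finset.sum_congr rfl fun i _ => ?_
  rw [hM, mul_comm ((N j : ℝ)) (f M i), mul_div_assoc, hscal j]
  ring
end

section
/- Fix L ≥ 1 and a function g : (subsets of {0,...,L-1}) × {0,...,L-1} → ℝ. If h(π) := ∑_{j=0}^{L-1} g({π(j),...,π(L-1)}, π(j)) for permutations π, then ∑_{π ∈ S_L} h(π) = ∑_{M ≠ ∅} ∑_{i ∈ M} (L-|M|)!·(|M|-1)!·g(M, i). -/
open Finset Equiv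

private def Tset (L : ℕ) (j : Fin L) : Finset (Fin L) := Finset.univ.filter (fun k => j ≤ k)

variable {L : ℕ}

private lemma card_Tset (j : Fin L) : (Tset L j).card = L - j.val := by
  have : Tset L j = Finset.Ici j := by ext k; simp [Tset]
  rw [this, Fin.card_Ici]

private lemma mem_Tset_self (j : Fin L) : j ∈ Tset L j := by simp [Tset]

/-- existence of a permutation realizing (M, i) -/
private lemma exists_perm (j : Fin L) (M : Finset (Fin L)) (i : Fin L) (hi : i ∈ M)
    (hcard : M.card = L - j.val) :
    ∃ π : Equiv.Perm (Fin L), (Tset L j).image π = M ∧ π j = i := by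
  have hc1 : Fintype.card {x // x ∈ Tset L j} = Fintype.card {x // x ∈ M} := by
    rw [Fintype.card_coe, Fintype.card_coe, card_Tset, hcard]
  have e0 : {x // x ∈ Tset L j} ≃ {x // x ∈ M} := Fintype.equivOfCardEq hc1
  obtain ⟨e1, he1⟩ : ∃ e : {x // x ∈ Tset L j} ≃ {x // x ∈ M},
      e ⟨j, mem_Tset_self j⟩ = ⟨i, hi⟩ :=
    ⟨e0.trans (Equiv.swap (e0 ⟨j, mem_Tset_self j⟩) ⟨i, hi⟩), by
      simp [Equiv.swap_apply_left]⟩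
  have hc2 : Fintype.card {x // ¬ x ∈ Tset L j} = Fintype.card {x // ¬ x ∈ M} := by
    rw [Fintype.card_subtype_compl, Fintype.card_subtype_compl, hc1]
  have ec : {x // ¬ x ∈ Tset L j} ≃ {x // ¬ x ∈ M} := Fintype.equivOfCardEq hc2
  refine ⟨(Equiv.sumCompl (· ∈ Tset L j)).symm.trans ((e1.sumCongr ec).trans
    (Equiv.sumCompl (· ∈ M))), ?_, ?_⟩
  · have hmaps : ∀ x ∈ Tset L j,
        ((Equiv.sumCompl (· ∈ Tset L j)).symm.trans ((e1.sumCongr ec).trans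
          (Equiv.sumCompl (· ∈ M)))) x ∈ M := by
      intro x hx
      simp [Equiv.sumCompl_symm_apply_of_pos hx]
    apply Finset.eq_of_subset_of_card_le
    · intro y hy
      obtain ⟨x, hx, rfl⟩ := Finset.mem_image.mp hy
      exact hmaps x hx
    · rw [Finset.card_image_of_injective _ (Equiv.injective _), card_Tset, hcard]
  · simp [Equiv.sumCompl_symm_apply_of_pos (mem_Tset_self j), he1]

/-- transport of the fiber condition along composition -/
private lemma fib_transport (j : Fin L) {M₁ M₂ : Finset (Fin L)} {i₁ i₂ : Fin L}
    {π₁ π₂ π : Equiv.Perm (Fin L)}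
    (h₁ : (Tset L j).image π₁ = M₁ ∧ π₁ j = i₁)
    (h₂ : (Tset L j).image π₂ = M₂ ∧ π₂ j = i₂)
    (h : (Tset L j).image π = M₁ ∧ π j = i₁) :
    (Tset L j).image (π₂ * π₁⁻¹ * π) = M₂ ∧ (π₂ * π₁⁻¹ * π) j = i₂ := by
  obtain ⟨h₁i, h₁j⟩ := h₁
  obtain ⟨h₂i, h₂j⟩ := h₂
  obtain ⟨hi, hj⟩ := h
  constructor
  · have : (Tset L j).image ⇑(π₂ * π₁⁻¹ * π) = (((Tset L j).image ⇑π).image ⇑(π₁⁻¹)).image ⇑π₂ := by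
      rw [Finset.image_image, Finset.image_image]
      rfl
    have hT : ((Tset L j).image ⇑π₁).image ⇑(π₁⁻¹) = Tset L j := by
      ext x; simp
    rw [this, hi, ← h₁i, hT, h₂i]
  · have : π₁⁻¹ (π j) = j := by rw [hj, ← h₁j]; simp
    simp [Equiv.Perm.mul_apply, this, h₂j]

private lemma fiber_card_eq_s8 (j : Fin L) {M₁ M₂ : Finset (Fin L)} {i₁ i₂ : Fin L}
    {π₁ π₂ : Equiv.Perm (Fin L)}
    (h₁ : (Tset L j).image π₁ = M₁ ∧ π₁ j = i₁)
    (h₂ : (Tset L j).image π₂ = M₂ ∧ π₂ j = i₂) :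
    Fintype.card {π : Equiv.Perm (Fin L) // (Tset L j).image π = M₁ ∧ π j = i₁}
      = Fintype.card {π : Equiv.Perm (Fin L) // (Tset L j).image π = M₂ ∧ π j = i₂} := by
  apply Fintype.card_congr
  refine ⟨fun ⟨π, h⟩ => ⟨π₂ * π₁⁻¹ * π, fib_transport j h₁ h₂ h⟩,
    fun ⟨π, h⟩ => ⟨π₁ * π₂⁻¹ * π, fib_transport j h₂ h₁ h⟩, ?_, ?_⟩
  · rintro ⟨π, h⟩
    ext x
    simp [Equiv.Perm.mul_apply]
  · rintro ⟨π, h⟩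
    ext x
    simp [Equiv.Perm.mul_apply]

private lemma orbit_card (L m : ℕ) :
    (Finset.univ.filter
      (fun p : Finset (Fin L) × Fin L => p.2 ∈ p.1 ∧ p.1.card = m)).card
      = m * Nat.choose L m := by
  rw [Finset.card_filter]
  rw [Fintype.sum_prod_type]
  have step : ∀ M : Finset (Fin L),
      (∑ i : Fin L, if i ∈ M ∧ M.card = m then 1 else 0)
        = if M.card = m then m else 0 := by
    intro M
    by_cases h : M.card = m
    · simp only [h, and_true, if_true]
      rw [Finset.sum_ite_mem, Finset.univ_inter, Finset.sum_const, h]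
      simp
    · simp [h]
  rw [Finset.sum_congr rfl (fun M _ => step M)]
  rw [← Finset.sum_filter]
  have : Finset.univ.filter (fun M : Finset (Fin L) => M.card = m)
      = Finset.powersetCard m Finset.univ := by
    rw [Finset.powersetCard_eq_filter, Finset.powerset_univ]
  rw [this, Finset.sum_const, Finset.card_powersetCard, Finset.card_univ,
    Fintype.card_fin, smul_eq_mul, mul_comm]

private lemma key_count {m : ℕ} (hm : 1 ≤ m) (hmL : m ≤ L) (j₀ : Fin L) (hj₀ : j₀.val = L - m)
    (M : Finset (Fin L)) (i : Fin L) (hi : i ∈ M) (hcard : M.card = m) :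
    Fintype.card {π : Equiv.Perm (Fin L) // (Tset L j₀).image π = M ∧ π j₀ = i}
      = (L - m).factorial * (m - 1).factorial := by
  have hTcard : (Tset L j₀).card = m := by
    rw [card_Tset, hj₀]; omega
  have hLm : ∀ M' : Finset (Fin L), M'.card = m ↔ M'.card = L - j₀.val := by
    intro M'; rw [hj₀]; omega
  -- base point
  have hbase : (Tset L j₀).image (1 : Equiv.Perm (Fin L)) = Tset L j₀
      ∧ (1 : Equiv.Perm (Fin L)) j₀ = j₀ := by
    constructor
    · simp
    · rfl
  -- every in-orbit fiber has the same cardinality c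
  set c := Fintype.card {π : Equiv.Perm (Fin L) //
      (Tset L j₀).image π = Tset L j₀ ∧ π j₀ = j₀} with hc
  have fib_eq_c : ∀ (M' : Finset (Fin L)) (i' : Fin L), i' ∈ M' → M'.card = m →
      Fintype.card {π : Equiv.Perm (Fin L) // (Tset L j₀).image π = M' ∧ π j₀ = i'}
        = c := by
    intro M' i' hi' hcard'
    obtain ⟨π₂, h₂⟩ := exists_perm j₀ M' i' hi' ((hLm M').mp hcard')
    exact (fiber_card_eq_s8 j₀ h₂ hbase)
  -- global count
  have hglobal : Nat.factorial L = (m * Nat.choose L m) * c := by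
    have h1 : (Finset.univ : Finset (Equiv.Perm (Fin L))).card
        = ∑ y : Finset (Fin L) × Fin L,
          (Finset.univ.filter (fun π : Equiv.Perm (Fin L) =>
            ((Tset L j₀).image π, π j₀) = y)).card :=
      Finset.card_eq_sum_card_fiberwise (fun π _ => Finset.mem_univ _)
    have h2 : ∀ y : Finset (Fin L) × Fin L,
        (Finset.univ.filter (fun π : Equiv.Perm (Fin L) =>
          ((Tset L j₀).image π, π j₀) = y)).card
        = if y.2 ∈ y.1 ∧ y.1.card = m then c else 0 := by
      intro ⟨M', i'⟩
      by_cases hy : i' ∈ M' ∧ M'.card = m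
      · rw [if_pos hy]
        rw [← Fintype.card_subtype]
        rw [← fib_eq_c M' i' hy.1 hy.2]
        apply Fintype.card_congr
        apply Equiv.subtypeEquivRight
        intro π
        simp [Prod.ext_iff]
      · rw [if_neg hy]
        rw [Finset.card_eq_zero, Finset.filter_eq_empty_iff]
        intro π _
        intro hcontra
        apply hy
        rw [Prod.ext_iff] at hcontra
        obtain ⟨hM', hi'⟩ := hcontra
        simp only at hM' hi' 
        constructor
        · rw [← hM', ← hi']
          exact Finset.mem_image_of_mem _ (mem_Tset_self j₀)
        · rw [← hM', Finset.card_image_of_injective _ π.injective, hTcard]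
    rw [Finset.card_univ, Fintype.card_perm, Fintype.card_fin] at h1
    rw [h1]
    rw [Finset.sum_congr rfl (fun y _ => h2 y)]
    rw [← Finset.sum_filter, Finset.sum_const, orbit_card, smul_eq_mul]
  -- factorial identity
  have hfact : (m * Nat.choose L m) * ((L - m).factorial * (m - 1).factorial)
      = Nat.factorial L := by
    have h3 := Nat.choose_mul_factorial_mul_factorial hmL
    have h4 : m * (m - 1).factorial = m.factorial := Nat.mul_factorial_pred (by omega)
    calc (m * Nat.choose L m) * ((L - m).factorial * (m - 1).factorial)
        = Nat.choose L m * (m * (m - 1).factorial) * (L - m).factorial := by ring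
      _ = Nat.choose L m * m.factorial * (L - m).factorial := by rw [h4]
      _ = Nat.factorial L := h3
  have hpos : 0 < m * Nat.choose L m :=
    Nat.mul_pos hm (Nat.choose_pos hmL)
  have := hglobal.symm.trans hfact.symm
  have hcc : c = (L - m).factorial * (m - 1).factorial :=
    Nat.eq_of_mul_eq_mul_left hpos this
  rw [fib_eq_c M i hi hcard, hcc]

private lemma pairN {L : ℕ} (M : Finset (Fin L)) (i : Fin L) :
    (Finset.univ.filter (fun p : Equiv.Perm (Fin L) × Fin L =>
        ((Tset L p.2).image p.1, p.1 p.2) = (M, i))).card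
      = if i ∈ M then (L - M.card).factorial * (M.card - 1).factorial else 0 := by
  by_cases hi : i ∈ M
  · rw [if_pos hi]
    have hm : 1 ≤ M.card := Finset.card_pos.mpr ⟨i, hi⟩
    have hmL : M.card ≤ L := by
      simpa using Finset.card_le_univ M
    have hL0 : L - M.card < L := by omega
    set j₀ : Fin L := ⟨L - M.card, hL0⟩ with hj₀def
    have hj₀ : j₀.val = L - M.card := rfl
    rw [← key_count hm hmL j₀ hj₀ M i hi rfl, Fintype.card_subtype]
    refine Finset.card_bij' (fun p _ => p.1) (fun π _ => (π, j₀)) ?mem1 ?mem2 ?linv ?rinv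
    case mem1 =>
      intro p hp
      rw [Finset.mem_filter] at hp
      obtain ⟨-, hp⟩ := hp
      rw [Prod.ext_iff] at hp
      simp only at hp
      obtain ⟨h1, h2⟩ := hp
      have hpj : p.2 = j₀ := by
        have hcardim : ((Tset L p.2).image p.1).card = L - p.2.val := by
          rw [Finset.card_image_of_injective _ p.1.injective, card_Tset]
        rw [h1] at hcardim
        have := p.2.isLt
        exact Fin.ext (by omega)
      rw [Finset.mem_filter]
      rw [hpj] at h1 h2
      exact ⟨Finset.mem_univ _, h1, h2⟩
    case mem2 =>
      intro π hπ
      rw [Finset.mem_filter] at hπ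
      rw [Finset.mem_filter, Prod.ext_iff]
      exact ⟨Finset.mem_univ _, hπ.2.1, hπ.2.2⟩
    case linv =>
      intro p hp
      rw [Finset.mem_filter] at hp
      obtain ⟨-, hp⟩ := hp
      rw [Prod.ext_iff] at hp
      simp only at hp
      obtain ⟨h1, h2⟩ := hp
      have hpj : p.2 = j₀ := by
        have hcardim : ((Tset L p.2).image p.1).card = L - p.2.val := by
          rw [Finset.card_image_of_injective _ p.1.injective, card_Tset]
        rw [h1] at hcardim
        have := p.2.isLt
        exact Fin.ext (by omega)
      exact Prod.ext_iff.mpr ⟨rfl, hpj.symm⟩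
    case rinv =>
      intro π hπ
      rfl
  · rw [if_neg hi, Finset.card_eq_zero, Finset.filter_eq_empty_iff]
    intro p _
    intro hcontra
    rw [Prod.ext_iff] at hcontra
    simp only at hcontra
    apply hi
    rw [← hcontra.1, ← hcontra.2]
    exact Finset.mem_image_of_mem _ (mem_Tset_self p.2)

/-- Unnormalized MDM/any-order equivalence: summing
`h(π) = ∑_j g({π(j),...,π(L-1)}, π(j))` over all permutations gives
`∑_{M ≠ ∅} ∑_{i ∈ M} (L-|M|)!·(|M|-1)!·g(M,i)`. -/
theorem stmt8 (L : ℕ) (hL : 1 ≤ L) (g : Finset (Fin L) → Fin L → ℝ) :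
    (∑ π : Equiv.Perm (Fin L), ∑ j : Fin L,
        g ((Finset.univ.filter (fun k : Fin L => j ≤ k)).image π) (π j))
    = ∑ M ∈ Finset.univ.filter (fun M : Finset (Fin L) => M ≠ ∅), ∑ i ∈ M,
        ((L - M.card).factorial : ℝ) * ((M.card - 1).factorial : ℝ) * g M i := by
  have lhs1 : (∑ π : Equiv.Perm (Fin L), ∑ j : Fin L,
        g ((Finset.univ.filter (fun k : Fin L => j ≤ k)).image π) (π j))
      = ∑ p : Equiv.Perm (Fin L) × Fin L, g ((Tset L p.2).image p.1) (p.1 p.2) := by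
    rw [Fintype.sum_prod_type]
    rfl
  rw [lhs1]
  rw [← Finset.sum_fiberwise_of_maps_to
      (t := (Finset.univ : Finset (Finset (Fin L) × Fin L)))
      (g := fun p : Equiv.Perm (Fin L) × Fin L => ((Tset L p.2).image p.1, p.1 p.2))
      (fun p _ => Finset.mem_univ _)
      (fun p => g ((Tset L p.2).image p.1) (p.1 p.2))]
  have inner : ∀ y : Finset (Fin L) × Fin L,
      (∑ p ∈ Finset.univ.filter (fun p : Equiv.Perm (Fin L) × Fin L =>
          ((Tset L p.2).image p.1, p.1 p.2) = y), g ((Tset L p.2).image p.1) (p.1 p.2))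
      = (if y.2 ∈ y.1 then ((L - y.1.card).factorial * (y.1.card - 1).factorial : ℕ) else 0)
          * g y.1 y.2 := by
    intro y
    have : ∀ p ∈ Finset.univ.filter (fun p : Equiv.Perm (Fin L) × Fin L =>
          ((Tset L p.2).image p.1, p.1 p.2) = y),
        g ((Tset L p.2).image p.1) (p.1 p.2) = g y.1 y.2 := by
      intro p hp
      rw [Finset.mem_filter] at hp
      rw [Prod.ext_iff] at hp
      obtain ⟨-, h1, h2⟩ := hp
      simp only at h1 h2
      rw [h1, h2]
    rw [Finset.sum_congr rfl this, Finset.sum_const, nsmul_eq_mul]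
    congr 1
    rw [pairN y.1 y.2]
  rw [Finset.sum_congr rfl (fun y _ => inner y)]
  -- now RHS side
  rw [Fintype.sum_prod_type]
  have rhs1 : ∀ M : Finset (Fin L),
      (∑ i : Fin L, (if i ∈ M then ((L - M.card).factorial * (M.card - 1).factorial : ℕ) else 0)
          * g M i)
      = ∑ i ∈ M, ((L - M.card).factorial : ℝ) * ((M.card - 1).factorial : ℝ) * g M i := by
    intro M
    have step : ∀ i : Fin L,
        ((if i ∈ M then ((L - M.card).factorial * (M.card - 1).factorial : ℕ) else 0 : ℕ) : ℝ)
            * g M i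
        = if i ∈ M then ((L - M.card).factorial : ℝ) * ((M.card - 1).factorial : ℝ) * g M i
            else 0 := by
      intro i
      split
      · push_cast
        ring
      · simp
    rw [Finset.sum_congr rfl (fun i _ => step i), Finset.sum_ite_mem,
      Finset.univ_inter]
  rw [Finset.sum_congr rfl (fun M _ => rhs1 M)]
  refine (Finset.sum_filter_of_ne ?_).symm
  intro M _ hne h0
  apply hne
  rw [h0]
  simp
end

section
/- Let p be a probability mass function on {1,...,m}^L with full support and let p_θ be any probability assignment such that for every nonempty mask M ⊆ {0,...,L-1} and every i ∈ M and every x, p_θ(x^i | x restricted to the complement of M) = p(x^i | x restricted to the complement of M). Then for every decoding order (permutation) π, the product ∏_{j=0}^{L-1} p_θ(x^{π(j)} | x^{π(0)},...,x^{π(j-1)}) equals p(x). -/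
/-- Marginal probability (under `p`) of agreeing with `x` on the index set `A`. -/
def marg {L m : ℕ} (p : (Fin L → Fin m) → ℝ) (A : Finset (Fin L))
    (x : Fin L → Fin m) : ℝ :=
  ∑ y : Fin L → Fin m, if ∀ a ∈ A, y a = x a then p y else 0

/-- Conditional probability of the value `x i` at coordinate `i` given the
values of `x` on `A`, defined as a ratio of marginals. -/
noncomputable def condProb {L m : ℕ} (p : (Fin L → Fin m) → ℝ)
    (A : Finset (Fin L)) (i : Fin L) (x : Fin L → Fin m) : ℝ :=
  marg p (insert i A) x / marg p A x

lemma marg_pos {L m : ℕ} (p : (Fin L → Fin m) → ℝ) (hp : ∀ x, 0 < p x)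
    (A : Finset (Fin L)) (x : Fin L → Fin m) : 0 < marg p A x := by
  unfold marg
  apply Finset.sum_pos' (fun y _ => by split_ifs; exacts [(hp y).le, le_rfl])
  exact ⟨x, Finset.mem_univ x, by simp [(hp x)]⟩

lemma prod_div_telescope (g : ℕ → ℝ) (hg : ∀ n, g n ≠ 0) :
    ∀ n, ∏ i ∈ Finset.range n, g (i + 1) / g i = g n / g 0 := by
  intro n
  induction n with
  | zero => simp [div_self (hg 0)]
  | succ n ih =>
      rw [Finset.prod_range_succ, ih, div_mul_div_comm, mul_comm (g 0) (g n),
        mul_div_mul_left _ _ (hg n)]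

/-- If the model conditionals `pθ M i x` (the conditional probability of the
value at a masked position `i ∈ M` given the values on the complement of the
mask `M`) agree with those of `p` for every nonempty mask, then for any
decoding order `π` the chain-rule product equals `p x`. -/
theorem stmt10 (L m : ℕ) (p : (Fin L → Fin m) → ℝ)
    (hp : ∀ x, 0 < p x) (hp1 : ∑ x, p x = 1)
    (pθ : Finset (Fin L) → Fin L → (Fin L → Fin m) → ℝ)
    (h : ∀ M : Finset (Fin L), M.Nonempty → ∀ i ∈ M, ∀ x : Fin L → Fin m,
      pθ M i x = condProb p Mᶜ i x)
    (π : Equiv.Perm (Fin L)) (x : Fin L → Fin m) :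
    ∏ j : Fin L,
        pθ ((Finset.univ.filter (fun k : Fin L => j ≤ k)).image π) (π j) x
      = p x := by
  set g : ℕ → ℝ := fun n =>
    marg p ((Finset.univ.filter (fun k : Fin L => (k : ℕ) < n)).image π) x with hg
  have hgpos : ∀ n, 0 < g n := fun n => marg_pos p hp _ x
  have hstep : ∀ j : Fin L,
      pθ ((Finset.univ.filter (fun k : Fin L => j ≤ k)).image π) (π j) x
        = g ((j : ℕ) + 1) / g (j : ℕ) := by
    intro j
    have hmem : π j ∈ (Finset.univ.filter (fun k : Fin L => j ≤ k)).image π := by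
      apply Finset.mem_image_of_mem
      simp
    have hne : ((Finset.univ.filter (fun k : Fin L => j ≤ k)).image π).Nonempty :=
      ⟨π j, hmem⟩
    rw [h _ hne _ hmem, condProb]
    have hcompl : ((Finset.univ.filter (fun k : Fin L => j ≤ k)).image π)ᶜ
        = (Finset.univ.filter (fun k : Fin L => (k : ℕ) < (j : ℕ))).image π := by
      ext a
      simp only [Finset.mem_compl, Finset.mem_image, Finset.mem_filter,
        Finset.mem_univ, true_and]
      constructor
      · intro ha
        refine ⟨π.symm a, ?_, by simp⟩
        by_contra hlt
        push_neg at hlt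
        exact ha ⟨π.symm a, Fin.le_def.mpr hlt, by simp⟩
      · rintro ⟨k, hk, rfl⟩ ⟨k', hk', hkk'⟩
        have := π.injective hkk'
        subst this
        omega
    have hins : insert (π j) ((Finset.univ.filter (fun k : Fin L => (k : ℕ) < (j : ℕ))).image π)
        = (Finset.univ.filter (fun k : Fin L => (k : ℕ) < (j : ℕ) + 1)).image π := by
      have : (Finset.univ.filter (fun k : Fin L => (k : ℕ) < (j : ℕ) + 1))
          = insert j (Finset.univ.filter (fun k : Fin L => (k : ℕ) < (j : ℕ))) := by
        ext k
        simp only [Finset.mem_filter, Finset.mem_univ, true_and, Finset.mem_insert]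
        constructor
        · intro hk
          rcases Nat.lt_succ_iff_lt_or_eq.mp hk with hk | hk
          · exact Or.inr hk
          · exact Or.inl (Fin.ext hk)
        · rintro (rfl | hk) <;> omega
      rw [this, Finset.image_insert]
    rw [hcompl, hins]
  rw [Finset.prod_congr rfl (fun j _ => hstep j)]
  have : ∏ j : Fin L, g ((j : ℕ) + 1) / g (j : ℕ)
      = ∏ i ∈ Finset.range L, g (i + 1) / g i := by
    rw [Finset.prod_range fun i => g (i + 1) / g i]
  rw [this, prod_div_telescope g (fun n => (hgpos n).ne')]
  have hL : g L = p x := by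
    have huniv : (Finset.univ.filter (fun k : Fin L => (k : ℕ) < L)).image π
        = Finset.univ := by
      rw [show (Finset.univ.filter (fun k : Fin L => (k : ℕ) < L)) = Finset.univ by
        ext k; simp [k.isLt]]
      exact Finset.image_univ_equiv π
    simp only [hg, huniv]
    unfold marg
    have hcond : ∀ y : Fin L → Fin m,
        (∀ a ∈ (Finset.univ : Finset (Fin L)), y a = x a) = (y = x) := fun y => by
      simp [funext_iff]
    simp only [hcond]
    simp
  have h0 : g 0 = 1 := by
    simp only [hg]
    rw [show (Finset.univ.filter (fun k : Fin L => (k : ℕ) < 0)) = ∅ by simp]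
    unfold marg
    simpa using hp1
  rw [hL, h0, div_one]
end
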